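/- Let K be a connected subset of a finite graph and suppose u satisfies the comparison with cones property on all connected subsets of K. Then Lipⁿ(u,K) = Lipⁿ(u,∂K), i.e., the Lipschitz constant of u on K∪∂K (with respect to the restricted path metric d_K) equals the Lipschitz constant of its boundary values. -/

import Mathlib

/-! The cone comparison at a boundary vertex `x₀` with slope `L = Lipⁿ(u, ∂K)` gives
`|u x - u x₀| ≤ L d_K(x₀, x)`. An edge `pq` inside `K` is handled the same way on the component
of `q` in `K \ {p}`, which has `p` on its boundary. Hence `|u p - u q| ≤ L δ` on every edge of
`K ∪ ∂K`, and summing along a `d_K`-geodesic gives `Lipⁿ(u, K) ≤ L`. -/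

open Filter Topology
open scoped Classical

noncomputable section

variable {V : Type*}

/-- A path from `x` to `y` whose interior vertices `l` all lie in `K`. -/
def pathIn (adj : V → V → Prop) (K : Set V) (x y : V) (l : List V) : Prop :=
  List.Chain adj x (l ++ [y]) ∧ ∀ z ∈ l, z ∈ K

/-- The restricted path metric `d_K` (edge length `δ`), via paths with interior in `K`. -/
def dK (adj : V → V → Prop) (K : Set V) (δ : ℝ) (x y : V) : ℝ :=
  if x = y then 0
  else sInf {r : ℝ | ∃ l : List V, pathIn adj K x y l ∧ r = δ * (l.length + 1)}

/-- The boundary of a vertex set `K`. -/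
def bdry (adj : V → V → Prop) (K : Set V) : Set V :=
  {y | y ∉ K ∧ ∃ x ∈ K, adj x y}

/-- The graph infinity Laplacian. -/
def lapInf (adj : V → V → Prop) (u : V → ℝ) (x : V) : ℝ :=
  sSup ((fun y => u y - u x) '' {y | adj x y}) +
    sInf ((fun y => u y - u x) '' {y | adj x y})

/-- The local Lipschitz constant `F(u,x)` at a vertex `x`. -/
def locLip (adj : V → V → Prop) (δ : ℝ) (u : V → ℝ) (x : V) : ℝ :=
  sSup ((fun y => |u x - u y| / δ) '' {y | adj x y})

/-- The Lipschitz constant of `u` over the set `A`, measured in the metric `d_K`. -/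
def LipOn (adj : V → V → Prop) (K A : Set V) (δ : ℝ) (u : V → ℝ) : ℝ :=
  sSup {r : ℝ | ∃ x ∈ A, ∃ y ∈ A, x ≠ y ∧ r = |u x - u y| / dK adj K δ x y}

/-- `K` is connected: any two points of `K ∪ ∂K` are joined by a path through `K`. -/
def connectedIn (adj : V → V → Prop) (K : Set V) : Prop :=
  ∀ x ∈ K ∪ bdry adj K, ∀ y ∈ K ∪ bdry adj K, x ≠ y → ∃ l, pathIn adj K x y l

section Paths

variable {adj : V → V → Prop} {K : Set V} {x y z : V} {l : List V}

lemma pathIn_mono {K₁ K₂ : Set V} (h : K₁ ⊆ K₂) (hp : pathIn adj K₁ x y l) :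
    pathIn adj K₂ x y l :=
  ⟨hp.1, fun w hw => h (hp.2 w hw)⟩

lemma pathIn_nil (h : adj x y) : pathIn adj K x y [] :=
  ⟨List.isChain_pair.mpr h, by simp⟩

lemma pathIn_cons {v : V} (hp : pathIn adj K x y (v :: l)) :
    adj x v ∧ v ∈ K ∧ pathIn adj K v y l := by
  obtain ⟨hch, hm⟩ := hp
  rw [List.cons_append, List.Chain, List.isChain_cons_cons] at hch
  exact ⟨hch.1, hm v (by simp), hch.2, fun w hw => hm w (by simp [hw])⟩

lemma pathIn_append_cons {l₁ l₂ : List V} (h₁ : pathIn adj K x z l₁) (h₂ : pathIn adj K z y l₂)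
    (hz : z ∈ K) : pathIn adj K x y (l₁ ++ z :: l₂) := by
  refine ⟨?_, fun w hw => ?_⟩
  · rw [List.append_assoc, List.cons_append, List.Chain, List.isChain_cons_split]
    exact ⟨h₁.1, h₂.1⟩
  · simp only [List.mem_append, List.mem_cons] at hw
    rcases hw with hw | rfl | hw
    · exact h₁.2 w hw
    · exact hz
    · exact h₂.2 w hw

lemma pathIn_append_singleton (hp : pathIn adj K x z l) (h : adj z y) (hz : z ∈ K) :
    pathIn adj K x y (l ++ [z]) :=
  pathIn_append_cons hp (pathIn_nil h) hz

lemma pathIn_reverse (hsymm : ∀ x y, adj x y → adj y x) (hp : pathIn adj K x y l) :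
    pathIn adj K y x l.reverse := by
  refine ⟨?_, fun w hw => hp.2 w (List.mem_reverse.mp hw)⟩
  have hch : List.IsChain adj (x :: (l ++ [y])) := hp.1
  have hrev := (List.isChain_reverse (R := adj)).mpr (hch.imp fun a b => hsymm a b)
  rwa [show (x :: (l ++ [y])).reverse = y :: (l.reverse ++ [x]) by simp] at hrev

end Paths

section RestrictedMetric

variable {adj : V → V → Prop} {K : Set V} {δ : ℝ} {x y : V}

lemma dK_self (x : V) : dK adj K δ x x = 0 :=
  if_pos rfl

lemma dK_nonneg (hδ : 0 ≤ δ) (x y : V) : 0 ≤ dK adj K δ x y := by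
  unfold dK
  split_ifs
  · exact le_rfl
  · exact Real.sInf_nonneg (by rintro r ⟨l, _, rfl⟩; positivity)

lemma bddBelow_pathLengths (hδ : 0 ≤ δ) :
    BddBelow {r : ℝ | ∃ l : List V, pathIn adj K x y l ∧ r = δ * (l.length + 1)} :=
  ⟨0, by rintro r ⟨l, _, rfl⟩; positivity⟩

lemma dK_le_of_pathIn (hδ : 0 ≤ δ) (hne : x ≠ y) {l : List V} (hp : pathIn adj K x y l) :
    dK adj K δ x y ≤ δ * (l.length + 1) := by
  rw [dK, if_neg hne]
  exact csInf_le (bddBelow_pathLengths hδ) ⟨l, hp, rfl⟩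

lemma dK_le_of_adj (hδ : 0 ≤ δ) (hne : x ≠ y) (h : adj x y) : dK adj K δ x y ≤ δ := by
  simpa using dK_le_of_pathIn (K := K) hδ hne (pathIn_nil h)

lemma dK_pos (hδ : 0 < δ) (hne : x ≠ y) (hex : ∃ l, pathIn adj K x y l) :
    0 < dK adj K δ x y := by
  rw [dK, if_neg hne]
  obtain ⟨l, hl⟩ := hex
  refine hδ.trans_le (le_csInf ⟨_, l, hl, rfl⟩ ?_)
  rintro r ⟨l', _, rfl⟩
  nlinarith [l'.length.cast_nonneg (α := ℝ)]

lemma dK_symm (hsymm : ∀ x y, adj x y → adj y x) (x y : V) :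
    dK adj K δ x y = dK adj K δ y x := by
  by_cases h : x = y
  · rw [h]
  · rw [dK, dK, if_neg h, if_neg (Ne.symm h)]
    congr 1
    ext r
    constructor <;>
      · rintro ⟨l, hl, rfl⟩
        exact ⟨l.reverse, pathIn_reverse hsymm hl, by simp⟩

lemma dK_le_dK_of_subset {C : Set V} (hsub : C ⊆ K) (hδ : 0 ≤ δ) (hne : x ≠ y)
    (hex : ∃ l, pathIn adj C x y l) : dK adj K δ x y ≤ dK adj C δ x y := by
  rw [dK, dK, if_neg hne, if_neg hne]
  obtain ⟨l, hl⟩ := hex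
  refine csInf_le_csInf (bddBelow_pathLengths hδ) ⟨_, l, hl, rfl⟩ ?_
  rintro r ⟨l', hl', rfl⟩
  exact ⟨l', pathIn_mono hsub hl', rfl⟩

lemma exists_pathIn_dK_eq (hδ : 0 ≤ δ) (hne : x ≠ y) (hex : ∃ l, pathIn adj K x y l) :
    ∃ l, pathIn adj K x y l ∧ dK adj K δ x y = δ * (l.length + 1) := by
  have hP : ∃ n, ∃ l : List V, pathIn adj K x y l ∧ l.length = n := by
    obtain ⟨l, hl⟩ := hex
    exact ⟨l.length, l, hl, rfl⟩
  obtain ⟨l, hl, hlen⟩ := Nat.find_spec hP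
  refine ⟨l, hl, ?_⟩
  rw [dK, if_neg hne]
  refine IsLeast.csInf_eq ⟨⟨l, hl, rfl⟩, ?_⟩
  rintro r ⟨l', hl', rfl⟩
  have : (l.length : ℝ) ≤ l'.length := by
    exact_mod_cast hlen ▸ Nat.find_min' hP ⟨l', hl', rfl⟩
  gcongr

end RestrictedMetric

section Lipschitz

variable {adj : V → V → Prop} {K A : Set V} {δ : ℝ} {u : V → ℝ}

lemma lipOn_bddAbove [Fintype V] :
    BddAbove {r : ℝ | ∃ x ∈ A, ∃ y ∈ A, x ≠ y ∧ r = |u x - u y| / dK adj K δ x y} := by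
  refine (Set.finite_range fun p : V × V => |u p.1 - u p.2| / dK adj K δ p.1 p.2).subset ?_
    |>.bddAbove
  rintro r ⟨x, -, y, -, -, rfl⟩
  exact ⟨(x, y), rfl⟩

lemma lipOn_nonneg (hδ : 0 ≤ δ) : 0 ≤ LipOn adj K A δ u :=
  Real.sSup_nonneg <| by
    rintro r ⟨x, -, y, -, -, rfl⟩
    exact div_nonneg (abs_nonneg _) (dK_nonneg hδ x y)

lemma lipOn_le (hδ : 0 ≤ δ) {c : ℝ} (hc : 0 ≤ c)
    (h : ∀ x ∈ A, ∀ y ∈ A, x ≠ y → |u x - u y| ≤ c * dK adj K δ x y) :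
    LipOn adj K A δ u ≤ c :=
  Real.sSup_le (fun _ ⟨x, hx, y, hy, hne, hr⟩ =>
    hr ▸ div_le_of_le_mul₀ (dK_nonneg hδ x y) hc (h x hx y hy hne)) hc

lemma abs_sub_le_lipOn_mul_dK [Fintype V] (hδ : 0 < δ) (hconn : connectedIn adj K)
    (hA : A ⊆ K ∪ bdry adj K) {x y : V} (hx : x ∈ A) (hy : y ∈ A) :
    |u x - u y| ≤ LipOn adj K A δ u * dK adj K δ x y := by
  by_cases hne : x = y
  · simp [hne, dK_self]
  have hd := dK_pos hδ hne (hconn x (hA hx) y (hA hy) hne)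
  rw [← div_le_iff₀ hd]
  exact le_csSup lipOn_bddAbove ⟨x, hx, y, hy, hne, rfl⟩

lemma abs_sub_le_of_pathIn {B : ℝ}
    (hstep : ∀ p ∈ K ∪ bdry adj K, ∀ q ∈ K ∪ bdry adj K, adj p q → |u p - u q| ≤ B)
    {l : List V} : ∀ {x y : V}, pathIn adj K x y l → x ∈ K ∪ bdry adj K →
      y ∈ K ∪ bdry adj K → |u x - u y| ≤ B * (l.length + 1) := by
  induction l with
  | nil =>
    intro x y hp hx hy
    simpa using hstep x hx y hy (List.isChain_pair.mp hp.1)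
  | cons v l ih =>
    intro x y hp hx hy
    obtain ⟨hxv, hv, hp'⟩ := pathIn_cons hp
    have h₁ := hstep x hx v (Or.inl hv) hxv
    have h₂ := ih hp' (Or.inl hv) hy
    calc |u x - u y| ≤ |u x - u v| + |u v - u y| := abs_sub_le _ _ _
      _ ≤ B * ((v :: l).length + 1) := by push_cast [List.length_cons]; linarith

end Lipschitz

/-- The hypothesis `hCC` of `stmt19` unfolds to
`∀ K' ⊆ K, connectedIn adj K' → ComparisonWithCones adj δ u K'`. -/
def ComparisonWithCones (adj : V → V → Prop) (δ : ℝ) (u : V → ℝ) (K' : Set V) : Prop :=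
  ∀ x₀ ∈ bdry adj K', ∀ lam : ℝ, 0 ≤ lam → ∀ α : ℝ,
    ((∀ y ∈ bdry adj K', u y ≤ α + lam * dK adj K' δ x₀ y) →
      ∀ x ∈ K', u x ≤ α + lam * dK adj K' δ x₀ x) ∧
    ((∀ y ∈ bdry adj K', α - lam * dK adj K' δ x₀ y ≤ u y) →
      ∀ x ∈ K', α - lam * dK adj K' δ x₀ x ≤ u x)

section Cones

variable {adj : V → V → Prop} {K : Set V} {δ : ℝ} {u : V → ℝ} {x₀ : V}

lemma ComparisonWithCones.abs_sub_le (hcc : ComparisonWithCones adj δ u K)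
    (hx₀ : x₀ ∈ bdry adj K) {L : ℝ} (hL : 0 ≤ L)
    (hb : ∀ y ∈ bdry adj K, |u y - u x₀| ≤ L * dK adj K δ x₀ y) {x : V} (hx : x ∈ K) :
    |u x - u x₀| ≤ L * dK adj K δ x₀ x := by
  obtain ⟨hup, hdown⟩ := hcc x₀ hx₀ L hL (u x₀)
  have h₁ := hup (fun y hy => by linarith [(abs_sub_le_iff.mp (hb y hy)).1]) x hx
  have h₂ := hdown (fun y hy => by linarith [(abs_sub_le_iff.mp (hb y hy)).2]) x hx
  exact abs_sub_le_iff.mpr ⟨by linarith, by linarith⟩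

lemma ComparisonWithCones.abs_sub_le_lipOn [Fintype V] (hcc : ComparisonWithCones adj δ u K)
    (hδ : 0 < δ) (hconn : connectedIn adj K) (hx₀ : x₀ ∈ bdry adj K) {x : V}
    (hx : x ∈ K ∪ bdry adj K) :
    |u x - u x₀| ≤ LipOn adj K (bdry adj K) δ u * dK adj K δ x₀ x := by
  have hb : ∀ y ∈ bdry adj K, |u y - u x₀| ≤ LipOn adj K (bdry adj K) δ u * dK adj K δ x₀ y :=
    fun y hy => abs_sub_comm (u y) (u x₀) ▸
      abs_sub_le_lipOn_mul_dK hδ hconn Set.subset_union_right hx₀ hy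
  rcases hx with hx | hx
  · exact hcc.abs_sub_le hx₀ (lipOn_nonneg hδ.le) hb hx
  · exact hb x hx

end Cones

def reachSet (adj : V → V → Prop) (S : Set V) (z : V) : Set V :=
  {w | Relation.ReflTransGen (fun a b => adj a b ∧ b ∈ S) z w}

section Components

variable {adj : V → V → Prop} {S : Set V} {z : V}

lemma mem_reachSet_self : z ∈ reachSet adj S z :=
  Relation.ReflTransGen.refl

lemma reachSet_subset (hz : z ∈ S) : reachSet adj S z ⊆ S := by
  intro w hw
  induction hw with
  | refl => exact hz
  | tail _ hbc => exact hbc.2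

lemma notMem_of_mem_bdry_reachSet {w : V} (hw : w ∈ bdry adj (reachSet adj S z)) : w ∉ S := by
  obtain ⟨hwR, c, hc, hcw⟩ := hw
  exact fun hwS => hwR (Relation.ReflTransGen.tail hc ⟨hcw, hwS⟩)

lemma exists_pathIn_reachSet {c y : V} (hc : c ∈ reachSet adj S z) (hcy : adj c y) :
    ∃ l, pathIn adj (reachSet adj S z) z y l := by
  induction hc generalizing y with
  | refl => exact ⟨[], pathIn_nil hcy⟩
  | @tail a c ha hac ih =>
    obtain ⟨l, hl⟩ := ih hac.1
    exact ⟨l ++ [c], pathIn_append_singleton hl hcy (ha.tail hac)⟩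

lemma exists_pathIn_reachSet_of_mem {y : V}
    (hy : y ∈ reachSet adj S z ∪ bdry adj (reachSet adj S z)) (hyz : y ≠ z) :
    ∃ l, pathIn adj (reachSet adj S z) z y l := by
  rcases hy with hy | ⟨-, c, hc, hcy⟩
  · obtain rfl | ⟨c, hc, hcy⟩ := hy.cases_tail
    · exact absurd rfl hyz
    · exact exists_pathIn_reachSet hc hcy.1
  · exact exists_pathIn_reachSet hc hcy

lemma connectedIn_reachSet (hsymm : ∀ x y, adj x y → adj y x) :
    connectedIn adj (reachSet adj S z) := by
  intro a ha b hb hab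
  by_cases haz : a = z
  · subst haz
    exact exists_pathIn_reachSet_of_mem hb hab.symm
  obtain ⟨l₁, h₁⟩ := exists_pathIn_reachSet_of_mem ha haz
  by_cases hbz : b = z
  · subst hbz
    exact ⟨l₁.reverse, pathIn_reverse hsymm h₁⟩
  obtain ⟨l₂, h₂⟩ := exists_pathIn_reachSet_of_mem hb hbz
  exact ⟨_, pathIn_append_cons (pathIn_reverse hsymm h₁) h₂ mem_reachSet_self⟩

end Components

section EdgeBound

variable [Fintype V] {adj : V → V → Prop} {K : Set V} {δ : ℝ} {u : V → ℝ}

/-- For the component `C` of `q` in `K \ {p}` we have `∂C ⊆ ∂K ∪ {p}` and `d_K ≤ d_C`, so the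
cone of slope `L` at `p` dominates `u` on `∂C`. -/
lemma abs_sub_le_lipOn_bdry_mul_of_adj_of_mem (hsymm : ∀ x y, adj x y → adj y x) (hδ : 0 < δ)
    (hconn : connectedIn adj K)
    (hCC : ∀ K' ⊆ K, connectedIn adj K' → ComparisonWithCones adj δ u K')
    {p q : V} (hp : p ∈ K) (hq : q ∈ K) (hpq : p ≠ q) (hadj : adj p q) :
    |u p - u q| ≤ LipOn adj K (bdry adj K) δ u * δ := by
  set L := LipOn adj K (bdry adj K) δ u
  have hL : 0 ≤ L := lipOn_nonneg hδ.le
  set C := reachSet adj (K \ {p}) q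
  have hCKp : C ⊆ K \ {p} := reachSet_subset ⟨hq, hpq.symm⟩
  have hCK : C ⊆ K := hCKp.trans Set.sdiff_subset
  have hCconn : connectedIn adj C := connectedIn_reachSet hsymm
  have hpC : p ∈ bdry adj C := ⟨fun h => (hCKp h).2 rfl, q, mem_reachSet_self, hsymm p q hadj⟩
  have hb : ∀ y ∈ bdry adj C, |u y - u p| ≤ L * dK adj C δ p y := by
    intro y hy
    by_cases hyp : y = p
    · simp [hyp, dK_self]
    have hyK : y ∈ bdry adj K := by
      obtain ⟨c, hc, hcy⟩ := hy.2
      exact ⟨fun hyK => notMem_of_mem_bdry_reachSet hy ⟨hyK, hyp⟩, c, hCK hc, hcy⟩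
    have hdC : dK adj K δ p y ≤ dK adj C δ p y :=
      dK_le_dK_of_subset hCK hδ.le (Ne.symm hyp) (hCconn p (.inr hpC) y (.inr hy) (Ne.symm hyp))
    calc |u y - u p| = |u p - u y| := abs_sub_comm _ _
      _ ≤ L * dK adj K δ y p := (hCC K subset_rfl hconn).abs_sub_le_lipOn hδ hconn hyK (.inl hp)
      _ ≤ L * dK adj C δ p y := by rw [dK_symm hsymm]; gcongr
  rw [abs_sub_comm]
  calc |u q - u p| ≤ L * dK adj C δ p q :=
        (hCC C hCK hCconn).abs_sub_le hpC hL hb mem_reachSet_self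
    _ ≤ L * δ := by gcongr; exact dK_le_of_adj hδ.le hpq hadj

lemma abs_sub_le_lipOn_bdry_mul_of_adj (hsymm : ∀ x y, adj x y → adj y x) (hδ : 0 < δ)
    (hconn : connectedIn adj K)
    (hCC : ∀ K' ⊆ K, connectedIn adj K' → ComparisonWithCones adj δ u K')
    {p q : V} (hp : p ∈ K ∪ bdry adj K) (hq : q ∈ K ∪ bdry adj K) (hadj : adj p q) :
    |u p - u q| ≤ LipOn adj K (bdry adj K) δ u * δ := by
  have hL : 0 ≤ LipOn adj K (bdry adj K) δ u := lipOn_nonneg hδ.le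
  by_cases hpq : p = q
  · simp only [hpq, sub_self, abs_zero]
    positivity
  have hcc := hCC K subset_rfl hconn
  rcases hq with hqK | hqK
  · rcases hp with hpK | hpK
    · exact abs_sub_le_lipOn_bdry_mul_of_adj_of_mem hsymm hδ hconn hCC hpK hqK hpq hadj
    · calc |u p - u q| = |u q - u p| := abs_sub_comm _ _
        _ ≤ _ * dK adj K δ p q := hcc.abs_sub_le_lipOn hδ hconn hpK (.inl hqK)
        _ ≤ _ := by gcongr; exact dK_le_of_adj hδ.le hpq hadj
  · calc |u p - u q| ≤ _ * dK adj K δ q p := hcc.abs_sub_le_lipOn hδ hconn hqK hp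
      _ ≤ _ := by gcongr; exact dK_le_of_adj hδ.le (Ne.symm hpq) (hsymm p q hadj)

end EdgeBound

/-- Comparison with cones on all connected subsets of `K` implies that the
Lipschitz constant on `K` equals that of the boundary values. -/
theorem stmt19 [Fintype V] (adj : V → V → Prop) (hsymm : ∀ x y, adj x y → adj y x)
    (δ : ℝ) (hδ : 0 < δ) (K : Set V) (hconn : connectedIn adj K) (u : V → ℝ)
    (hCC : ∀ K' ⊆ K, connectedIn adj K' →
      ∀ x₀ ∈ bdry adj K', ∀ lam : ℝ, 0 ≤ lam → ∀ α : ℝ,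
        ((∀ y ∈ bdry adj K', u y ≤ α + lam * dK adj K' δ x₀ y) →
          ∀ x ∈ K', u x ≤ α + lam * dK adj K' δ x₀ x) ∧
        ((∀ y ∈ bdry adj K', α - lam * dK adj K' δ x₀ y ≤ u y) →
          ∀ x ∈ K', α - lam * dK adj K' δ x₀ x ≤ u x)) :
    LipOn adj K (K ∪ bdry adj K) δ u = LipOn adj K (bdry adj K) δ u := by
  refine le_antisymm (lipOn_le hδ.le (lipOn_nonneg hδ.le) fun a ha b hb hab => ?_)
    (lipOn_le hδ.le (lipOn_nonneg hδ.le) fun a ha b hb _ =>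
      abs_sub_le_lipOn_mul_dK hδ hconn subset_rfl (.inr ha) (.inr hb))
  obtain ⟨l, hl, hd⟩ := exists_pathIn_dK_eq hδ.le hab (hconn a ha b hb hab)
  rw [hd, ← mul_assoc]
  exact abs_sub_le_of_pathIn (adj := adj) (K := K)
    (fun p hp q hq => abs_sub_le_lipOn_bdry_mul_of_adj hsymm hδ hconn hCC hp hq) hl ha hb

end
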